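/- Let r, p, n, k be positive integers with p dividing r. Then the ℂ-linear span of {φ_k(x_d) : d ∈ A_k(r,p,n)} in End(V^{⊗k}) equals the centralizer algebra End_{G(r,p,n)}(V^{⊗k}) = {F ∈ End(V^{⊗k}) : F ∘ g^{⊗k} = g^{⊗k} ∘ F for all g ∈ G(r,p,n)}. Moreover, φ_k(x_d) = 0 for every d ∈ A_k(r,p,n) having more than n blocks, and if n ≥ 2k then the family (φ_k(x_d))_{d ∈ A_k(r,p,n)} is linearly independent. -/

import Mathlib

open scoped Classical
open Matrix

noncomputable section

namespace Tanabe

/-! ## Tensor space model of `V^{⊗k}` for `V = ℂ^n`.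
A tensor is encoded by its coordinates, i.e. a function `(Fin k → Fin n) → ℂ`;
the basis vector `v_{i_1} ⊗ ⋯ ⊗ v_{i_k}` corresponds to the indicator function
of the tuple `(i_1, …, i_k)`. -/

abbrev TP (n k : ℕ) : Type := (Fin k → Fin n) → ℂ

/-- The linear endomorphism of `V^{⊗k}` with matrix `K` in the standard basis:
it sends the basis vector indexed by the tuple `i` to `∑ₒ K o i • (basis vector o)`. -/
def kernelMap (n k : ℕ) (K : (Fin k → Fin n) → (Fin k → Fin n) → ℂ) :
    TP n k →ₗ[ℂ] TP n k where
  toFun f := fun o => ∑ i : Fin k → Fin n, K o i * f i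
  map_add' f g := by
    funext o
    simp only [Pi.add_apply, mul_add]
    exact Finset.sum_add_distrib
  map_smul' c f := by
    funext o
    simp only [Pi.smul_apply, smul_eq_mul, RingHom.id_apply]
    rw [Finset.mul_sum]
    exact Finset.sum_congr rfl fun i _ => by ring

/-- The diagonal (tensor-power) action `g^{⊗k}` of a matrix `g` on `V^{⊗k}`. -/
def tensorPow (n k : ℕ) (g : Matrix (Fin n) (Fin n) ℂ) : TP n k →ₗ[ℂ] TP n k :=
  kernelMap n k fun o i => ∏ t : Fin k, g (o t) (i t)

/-! ## Set partitions of `{1,…,t,1′,…,t′}`.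
A set partition of `{1,…,t,1′,…,t′}` is encoded as a `Setoid` on `Fin t ⊕ Fin t`,
with `Sum.inl` the unprimed (top row) elements and `Sum.inr` the primed (bottom row)
elements; blocks are the equivalence classes. -/

abbrev SP (t : ℕ) : Type := Setoid (Fin t ⊕ Fin t)

/-- `N(B)`: number of top-row (unprimed) elements in the block `q` of `d`. -/
def topCt {t : ℕ} (d : SP t) (q : Quotient d) : ℕ :=
  Nat.card {a : Fin t // Quotient.mk d (Sum.inl a) = q}

/-- `M(B)`: number of bottom-row (primed) elements in the block `q` of `d`. -/
def botCt {t : ℕ} (d : SP t) (q : Quotient d) : ℕ :=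
  Nat.card {a : Fin t // Quotient.mk d (Sum.inr a) = q}

/-- `|d|`: the number of blocks of `d`. -/
def nBlocks {t : ℕ} (d : SP t) : ℕ := Nat.card (Quotient d)

/-- Coefficient of `φ_t(x_d)`: equals `1` if the equalities among the values of the
combined tuple `c` are *exactly* those prescribed by `d`, and `0` otherwise. -/
def coeX (n t : ℕ) (d : SP t) (c : Fin t ⊕ Fin t → Fin n) : ℂ :=
  if ∀ a b : Fin t ⊕ Fin t, d.r a b ↔ c a = c b then 1 else 0

/-- Coefficient of `φ_t(d)` (the diagram basis): equals `1` if the values of the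
combined tuple `c` agree on each block of `d`, and `0` otherwise. -/
def coeD (n t : ℕ) (d : SP t) (c : Fin t ⊕ Fin t → Fin n) : ℂ :=
  if ∀ a b : Fin t ⊕ Fin t, d.r a b → c a = c b then 1 else 0

/-- The operator `φ_t(x_d)` on `V^{⊗t}`. -/
def phiX (n t : ℕ) (d : SP t) : TP n t →ₗ[ℂ] TP n t :=
  kernelMap n t fun o i => coeX n t d (Sum.elim i o)

/-- The operator `φ_t(d)` on `V^{⊗t}` (diagram basis). -/
def phiD (n t : ℕ) (d : SP t) : TP n t →ₗ[ℂ] TP n t :=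
  kernelMap n t fun o i => coeD n t d (Sum.elim i o)

/-- `d ∈ Π_t(r)` : every block `B` satisfies `N(B) ≡ M(B) (mod r)`. -/
def inPi (r : ℕ) {t : ℕ} (d : SP t) : Prop :=
  ∀ q : Quotient d, (topCt d q : ℤ) ≡ (botCt d q : ℤ) [ZMOD (r : ℤ)]

/-- `d ∈ Λ_t(r,p,n)` (here `m = r/p`). -/
def inLambda (r p n : ℕ) {t : ℕ} (d : SP t) : Prop :=
  nBlocks d = n ∧
  (∀ q : Quotient d,
    ((topCt d q : ℤ) ≡ (botCt d q : ℤ) [ZMOD ((r / p : ℕ) : ℤ)]) ∧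
    ¬ ((topCt d q : ℤ) ≡ (botCt d q : ℤ) [ZMOD (r : ℤ)])) ∧
  (∀ q q' : Quotient d,
    (topCt d q : ℤ) - (botCt d q : ℤ) ≡ (topCt d q' : ℤ) - (botCt d q' : ℤ) [ZMOD (r : ℤ)])

/-- `d ∈ Θ_t(r,p,n)` (here `m = r/p`). -/
def inTheta (r p n : ℕ) {t : ℕ} (d : SP t) : Prop :=
  n < nBlocks d ∧
  (∀ q : Quotient d, (topCt d q : ℤ) ≡ (botCt d q : ℤ) [ZMOD ((r / p : ℕ) : ℤ)]) ∧
  ∃ q : Quotient d, ¬ ((topCt d q : ℤ) ≡ (botCt d q : ℤ) [ZMOD (r : ℤ)])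

/-- `d ∈ A_t(r,p,n) = Π_t(r) ∪ Λ_t(r,p,n) ∪ Θ_t(r,p,n)`. -/
def inA (r p n : ℕ) {t : ℕ} (d : SP t) : Prop :=
  inPi r d ∨ inLambda r p n d ∨ inTheta r p n d

/-- `d ∈ A_{k+1/2}` : `k+1` and `(k+1)′` lie in the same block. -/
def isHalf (k : ℕ) (d : SP (k + 1)) : Prop :=
  d.r (Sum.inl (Fin.last k)) (Sum.inr (Fin.last k))

/-- `d ∈ Π_t(r,p,n)` : `d ∈ A_t(r,p,n)` with at most `n` blocks. -/
def inPiRPN (r p n : ℕ) {t : ℕ} (d : SP t) : Prop :=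
  inA r p n d ∧ nBlocks d ≤ n

/-- `{φ_k(x_d) : d ∈ A_k(r,p,n)}`. -/
def TanSet (r p n k : ℕ) : Set (TP n k →ₗ[ℂ] TP n k) :=
  {T | ∃ d : SP k, inA r p n d ∧ T = phiX n k d}

/-- `{φ_{k+1}(x_d) : d ∈ A_{k+1/2}(r,p,n)}` (as endomorphisms of `V^{⊗(k+1)}`). -/
def TanSetHalf (r p n k : ℕ) : Set (TP n (k + 1) →ₗ[ℂ] TP n (k + 1)) :=
  {T | ∃ d : SP (k + 1), (inA r p n d ∧ isHalf k d) ∧ T = phiX n (k + 1) d}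

/-! ## The groups `G(r,p,n)` and `L(r,p,n)` as matrix groups. -/

/-- The monomial matrix with underlying permutation `π` and weights `a` :
its `(i,j)` entry is `a j` if `i = π j` and `0` otherwise, so that it maps
`v_j ↦ a j • v_{π j}`. -/
def monoMat (n : ℕ) (π : Equiv.Perm (Fin n)) (a : Fin n → ℂ) :
    Matrix (Fin n) (Fin n) ℂ :=
  Matrix.of fun i j => if i = π j then a j else 0

/-- `G(r,p,n)` as a set of matrices: matrices with exactly one nonzero entry in each
row and column, whose nonzero entries are `r`-th roots of unity, and such that the
`m = r/p`-th power of the product of the nonzero entries is `1`. -/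
def GSet (r p n : ℕ) : Set (Matrix (Fin n) (Fin n) ℂ) :=
  {g | ∃ (π : Equiv.Perm (Fin n)) (a : Fin n → ℂ),
    (∀ i, a i ^ r = 1) ∧ (∏ i, a i) ^ (r / p) = 1 ∧ g = monoMat n π a}

/-- The last index of `Fin n` (position `n` in 1-indexed notation). -/
def lastIdx (n : ℕ) (hn : 0 < n) : Fin n := ⟨n - 1, by omega⟩

/-- `L(r,p,n)` as a set of matrices: elements of `G(r,p,n)` whose `(n,n)` entry
is nonzero. -/
def LSet (r p n : ℕ) (hn : 0 < n) : Set (Matrix (Fin n) (Fin n) ℂ) :=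
  {g | g ∈ GSet r p n ∧ g (lastIdx n hn) (lastIdx n hn) ≠ 0}

/-- The centralizer algebra `End_{G(r,p,n)}(V^{⊗k})`. -/
def centG (r p n k : ℕ) : Set (TP n k →ₗ[ℂ] TP n k) :=
  {F | ∀ g ∈ GSet r p n, F ∘ₗ tensorPow n k g = tensorPow n k g ∘ₗ F}

/-- The subspace `W = V^{⊗k} ⊗ ℂ v_n` of `V^{⊗(k+1)}` : coordinate functions
supported on tuples whose last entry is the last index. -/
def Wsub (n k : ℕ) (hn : 0 < n) : Submodule ℂ (TP n (k + 1)) where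
  carrier := {f | ∀ j : Fin (k + 1) → Fin n, j (Fin.last k) ≠ lastIdx n hn → f j = 0}
  add_mem' := by
    intro a b ha hb j hj
    simp [Pi.add_apply, ha j hj, hb j hj]
  zero_mem' := by intro j hj; rfl
  smul_mem' := by
    intro c a ha j hj
    simp [Pi.smul_apply, ha j hj]


/-! ## Group structure -/

abbrev GLn (n : ℕ) := Matrix.GeneralLinearGroup (Fin n) ℂ

lemma monoMat_mul (n : ℕ) (π σ : Equiv.Perm (Fin n)) (a b : Fin n → ℂ) :
    monoMat n π a * monoMat n σ b = monoMat n (π * σ) (fun j => a (σ j) * b j) := by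
  ext i j
  simp only [monoMat, Matrix.mul_apply, Matrix.of_apply, mul_ite, mul_zero, ite_mul, zero_mul]
  rw [Finset.sum_ite_eq' Finset.univ (σ j)]
  simp [Equiv.Perm.mul_apply]
  congr

lemma monoMat_one (n : ℕ) : monoMat n 1 (fun _ => (1 : ℂ)) = 1 := by
  ext i j
  simp [monoMat, Matrix.one_apply]
  congr

lemma one_mem_GSet (r p n : ℕ) : (1 : Matrix (Fin n) (Fin n) ℂ) ∈ GSet r p n :=
  ⟨1, fun _ => 1, fun _ => one_pow r, by simp, (monoMat_one n).symm⟩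

lemma mul_mem_GSet {r p n : ℕ} {g h : Matrix (Fin n) (Fin n) ℂ}
    (hg : g ∈ GSet r p n) (hh : h ∈ GSet r p n) : g * h ∈ GSet r p n := by
  obtain ⟨π, a, ha, hpa, rfl⟩ := hg
  obtain ⟨σ, b, hb, hpb, rfl⟩ := hh
  refine ⟨π * σ, fun j => a (σ j) * b j, fun i => by rw [mul_pow, ha, hb, one_mul], ?_,
    monoMat_mul n π σ a b⟩
  have h1 : (∏ i, (a (σ i) * b i)) = (∏ i, a i) * ∏ i, b i := by
    rw [Finset.prod_mul_distrib, Equiv.prod_comp σ a]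
  rw [h1, mul_pow, hpa, hpb, one_mul]

lemma a_ne_zero {r : ℕ} (hr : 0 < r) {a : ℂ} (ha : a ^ r = 1) : a ≠ 0 := by
  intro h0
  rw [h0, zero_pow hr.ne'] at ha
  exact zero_ne_one ha

lemma monoMat_mul_inv (n : ℕ) (π : Equiv.Perm (Fin n)) (a : Fin n → ℂ)
    (ha : ∀ i, a i ≠ 0) :
    monoMat n π a * monoMat n π⁻¹ (fun j => (a (π⁻¹ j))⁻¹) = 1 := by
  simp only [monoMat_mul]
  rw [mul_inv_cancel,
    show (fun j => a (π⁻¹ j) * (a (π⁻¹ j))⁻¹) = fun _ : Fin n => (1 : ℂ) from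
      funext fun j => mul_inv_cancel₀ (ha _),
    monoMat_one]

/-- The value of the inverse of a unit whose underlying matrix is a monomial matrix. -/
lemma gl_inv_val {n : ℕ} (g : GLn n) (π : Equiv.Perm (Fin n)) (a : Fin n → ℂ)
    (ha : ∀ i, a i ≠ 0) (hg : (↑g : Matrix (Fin n) (Fin n) ℂ) = monoMat n π a) :
    (↑g⁻¹ : Matrix (Fin n) (Fin n) ℂ) = monoMat n π⁻¹ (fun j => (a (π⁻¹ j))⁻¹) := by
  have hmul : (↑g : Matrix (Fin n) (Fin n) ℂ) *
      monoMat n π⁻¹ (fun j => (a (π⁻¹ j))⁻¹) = 1 := by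
    rw [hg]; exact monoMat_mul_inv n π a ha
  calc (↑g⁻¹ : Matrix (Fin n) (Fin n) ℂ)
      = ↑g⁻¹ * ((↑g : Matrix (Fin n) (Fin n) ℂ) *
          monoMat n π⁻¹ (fun j => (a (π⁻¹ j))⁻¹)) := by rw [hmul, mul_one]
    _ = ((↑g⁻¹ : Matrix (Fin n) (Fin n) ℂ) * ↑g) *
          monoMat n π⁻¹ (fun j => (a (π⁻¹ j))⁻¹) := by rw [mul_assoc]
    _ = monoMat n π⁻¹ (fun j => (a (π⁻¹ j))⁻¹) := by
          rw [← Units.val_mul, inv_mul_cancel, Units.val_one, one_mul]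

lemma inv_mem_GSet {r p n : ℕ} (hr : 0 < r) {g : GLn n}
    (hg : (↑g : Matrix (Fin n) (Fin n) ℂ) ∈ GSet r p n) :
    (↑g⁻¹ : Matrix (Fin n) (Fin n) ℂ) ∈ GSet r p n := by
  obtain ⟨π, a, ha, hpa, hgm⟩ := hg
  have hane : ∀ i, a i ≠ 0 := fun i => a_ne_zero hr (ha i)
  refine ⟨π⁻¹, fun j => (a (π⁻¹ j))⁻¹, fun i => by rw [inv_pow, ha, inv_one], ?_,
    gl_inv_val g π a hane hgm⟩
  rw [Finset.prod_inv_distrib, Equiv.prod_comp π⁻¹ a, inv_pow, hpa, inv_one]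

/-- The complex reflection group `G(r,p,n)` as a subgroup of `GL_n(ℂ)`. -/
def GGroup (r p n : ℕ) (hr : 0 < r) : Subgroup (GLn n) where
  carrier := {g | (↑g : Matrix (Fin n) (Fin n) ℂ) ∈ GSet r p n}
  one_mem' := by
    show (↑(1 : GLn n) : Matrix (Fin n) (Fin n) ℂ) ∈ GSet r p n
    rw [Units.val_one]; exact one_mem_GSet r p n
  mul_mem' := by
    intro g h hg hh
    show (↑(g * h) : Matrix (Fin n) (Fin n) ℂ) ∈ GSet r p n
    rw [Units.val_mul]; exact mul_mem_GSet hg hh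
  inv_mem' := by
    intro g hg
    exact inv_mem_GSet hr hg

lemma monoMat_last {n : ℕ} (hn : 0 < n) (π : Equiv.Perm (Fin n)) (a : Fin n → ℂ)
    (h : monoMat n π a (lastIdx n hn) (lastIdx n hn) ≠ 0) :
    π (lastIdx n hn) = lastIdx n hn ∧ a (lastIdx n hn) ≠ 0 := by
  by_cases hp : lastIdx n hn = π (lastIdx n hn)
  · refine ⟨hp.symm, ?_⟩
    intro h0
    apply h
    simp [monoMat, ← hp, h0]
  · exfalso; apply h; simp [monoMat, hp]

lemma monoMat_last_entry {n : ℕ} (hn : 0 < n) (π : Equiv.Perm (Fin n)) (a : Fin n → ℂ)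
    (hp : π (lastIdx n hn) = lastIdx n hn) :
    monoMat n π a (lastIdx n hn) (lastIdx n hn) = a (lastIdx n hn) := by
  simp [monoMat, hp]

/-- The subgroup `L(r,p,n)` of `G(r,p,n)` (matrices with nonzero `(n,n)` entry). -/
def LGroup (r p n : ℕ) (hr : 0 < r) (hn : 0 < n) : Subgroup (GLn n) where
  carrier := {g | (↑g : Matrix (Fin n) (Fin n) ℂ) ∈ LSet r p n hn}
  one_mem' := by
    refine ⟨?_, ?_⟩
    · show (↑(1 : GLn n) : Matrix (Fin n) (Fin n) ℂ) ∈ GSet r p n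
      rw [Units.val_one]; exact one_mem_GSet r p n
    · rw [Units.val_one]
      simp [Matrix.one_apply]
  mul_mem' := by
    rintro g h ⟨hg, hge⟩ ⟨hh, hhe⟩
    refine ⟨?_, ?_⟩
    · show (↑(g * h) : Matrix (Fin n) (Fin n) ℂ) ∈ GSet r p n
      rw [Units.val_mul]; exact mul_mem_GSet hg hh
    · obtain ⟨π, a, ha, hpa, hgm⟩ := hg
      obtain ⟨σ, b, hb, hpb, hhm⟩ := hh
      rw [hgm] at hge
      rw [hhm] at hhe
      obtain ⟨hπ, ha0⟩ := monoMat_last hn π a hge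
      obtain ⟨hσ, hb0⟩ := monoMat_last hn σ b hhe
      rw [Units.val_mul, hgm, hhm, monoMat_mul]
      rw [monoMat_last_entry hn _ _ (by simp [Equiv.Perm.mul_apply, hσ, hπ])]
      simp only [hσ]
      exact mul_ne_zero ha0 hb0
  inv_mem' := by
    rintro g ⟨hg, hge⟩
    obtain ⟨π, a, ha, hpa, hgm⟩ := hg
    have hane : ∀ i, a i ≠ 0 := fun i => a_ne_zero hr (ha i)
    rw [hgm] at hge
    obtain ⟨hπ, ha0⟩ := monoMat_last hn π a hge
    refine ⟨inv_mem_GSet hr ⟨π, a, ha, hpa, hgm⟩, ?_⟩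
    rw [gl_inv_val g π a hane hgm]
    have hπi : π⁻¹ (lastIdx n hn) = lastIdx n hn := by
      conv_lhs => rw [← hπ]
      simp
    rw [monoMat_last_entry hn _ _ hπi]
    simp only [hπi]
    exact inv_ne_zero ha0

lemma GGroup_le (r p n : ℕ) (hr : 0 < r) : GGroup r p n hr ≤ GGroup r 1 n hr := by
  rintro g ⟨π, a, ha, hpa, hgm⟩
  refine ⟨π, a, ha, ?_, hgm⟩
  rw [Nat.div_one, ← Finset.prod_pow]
  simp [ha]

lemma LGroup_le (r p n : ℕ) (hr : 0 < r) (hn : 0 < n) :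
    LGroup r p n hr hn ≤ LGroup r 1 n hr hn := by
  rintro g ⟨hg, hge⟩
  exact ⟨GGroup_le r p n hr hg, hge⟩

lemma LGroup_le_GGroup (r p n : ℕ) (hr : 0 < r) (hn : 0 < n) :
    LGroup r p n hr hn ≤ GGroup r p n hr := fun _ hg => hg.1

lemma LGroup_le_G1 (r p n : ℕ) (hr : 0 < r) (hn : 0 < n) :
    LGroup r p n hr hn ≤ GGroup r 1 n hr :=
  le_trans (LGroup_le_GGroup r p n hr hn) (GGroup_le r p n hr)

/-! ## Representation-theoretic notions -/

section Reps

variable {G : Type*} [Monoid G] {V : Type*} [AddCommGroup V] [Module ℂ V]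

/-- A submodule invariant under a representation. -/
def RepInvariant (ρ : Representation ℂ G V) (q : Submodule ℂ V) : Prop :=
  ∀ (g : G), ∀ v ∈ q, ρ g v ∈ q

/-- Irreducibility of a representation. -/
def RepIrreducible (ρ : Representation ℂ G V) : Prop :=
  Nontrivial V ∧ ∀ q : Submodule ℂ V, RepInvariant ρ q → q = ⊥ ∨ q = ⊤

/-- Irreducibility of an invariant subspace, as a subrepresentation. -/
def SubIrreducible (ρ : Representation ℂ G V) (q : Submodule ℂ V) : Prop :=
  q ≠ ⊥ ∧ ∀ q' : Submodule ℂ V, q' ≤ q → RepInvariant ρ q' → q' = ⊥ ∨ q' = q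

/-- Two (invariant) subspaces are isomorphic as subrepresentations: there is a
`ℂ`-linear equivalence between them intertwining the action. -/
def IsSubrepIso (ρ : Representation ℂ G V) (q q' : Submodule ℂ V) : Prop :=
  ∃ e : q ≃ₗ[ℂ] q', ∀ (g : G) (x : V) (hx : x ∈ q) (hgx : ρ g x ∈ q),
    ((e ⟨ρ g x, hgx⟩ : q') : V) = ρ g ((e ⟨x, hx⟩ : q') : V)

/-- A representation is multiplicity free: it is an (internal) direct sum of
pairwise non-isomorphic irreducible subrepresentations. -/
def RepMultFree (ρ : Representation ℂ G V) : Prop :=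
  ∃ (ι : Type) (_ : Fintype ι) (W : ι → Submodule ℂ V),
    (∀ i, RepInvariant ρ (W i)) ∧
    (∀ i, SubIrreducible ρ (W i)) ∧
    iSupIndep W ∧ (⨆ i, W i) = ⊤ ∧
    (∀ i j, i ≠ j → ¬ IsSubrepIso ρ (W i) (W j))

/-- Restriction of a representation of `K` to a subgroup `H ≤ K`. -/
def restrictRep {G : Type*} [Group G] {H K : Subgroup G} (h : H ≤ K)
    (ρ : Representation ℂ ↥K V) : Representation ℂ ↥H V :=
  MonoidHom.comp ρ (Subgroup.inclusion h)

end Reps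

/-! ## The elements `ζ_i^l ζ_j^{-l} s_{ij}` and the central elements `κ` -/

/-- `ζ = exp(2πi/r)`, a primitive `r`-th root of unity. -/
def zeta (r : ℕ) : ℂ := Complex.exp (2 * Real.pi * Complex.I / r)

lemma zeta_pow_self {r : ℕ} (hr : 0 < r) : zeta r ^ r = 1 := by
  rw [zeta, ← Complex.exp_nat_mul]
  rw [show (r : ℂ) * (2 * Real.pi * Complex.I / r) = 2 * Real.pi * Complex.I by
    rw [mul_div_assoc']
    exact mul_div_cancel_left₀ _ (Nat.cast_ne_zero.mpr hr.ne')]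
  exact Complex.exp_two_pi_mul_I

lemma zeta_ne_zero (r : ℕ) : zeta r ≠ 0 := Complex.exp_ne_zero _

/-- Weights of the monomial matrix `ζ_i^l ζ_j^{-l} s_{ij}` : `ζ^l` in position `i`,
`ζ^{-l}` in position `j`, `1` elsewhere. -/
def zijWt (r l : ℕ) {n : ℕ} (i j : Fin n) : Fin n → ℂ :=
  fun t => if t = i then zeta r ^ l else if t = j then (zeta r ^ l)⁻¹ else 1

/-- The matrix `ζ_i^l ζ_j^{-l} s_{ij}`. -/
def zijMat (n r l : ℕ) (i j : Fin n) : Matrix (Fin n) (Fin n) ℂ :=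
  monoMat n (Equiv.swap i j) (zijWt r l i j)

lemma zijWt_ne_zero (r l : ℕ) {n : ℕ} (i j : Fin n) (t : Fin n) :
    zijWt r l i j t ≠ 0 := by
  unfold zijWt
  split_ifs
  · exact pow_ne_zero _ (zeta_ne_zero r)
  · exact inv_ne_zero (pow_ne_zero _ (zeta_ne_zero r))
  · exact one_ne_zero

lemma zijWt_pow {r l : ℕ} (hr : 0 < r) {n : ℕ} (i j : Fin n) (t : Fin n) :
    zijWt r l i j t ^ r = 1 := by
  unfold zijWt
  split_ifs
  · rw [← pow_mul, mul_comm, pow_mul, zeta_pow_self hr, one_pow]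
  · rw [inv_pow, ← pow_mul, mul_comm, pow_mul, zeta_pow_self hr, one_pow, inv_one]
  · exact one_pow r

lemma zijWt_prod {r l : ℕ} {n : ℕ} {i j : Fin n} (hij : i ≠ j) :
    (∏ t, zijWt r l i j t) = 1 := by
  have hfun : (fun t => zijWt r l i j t) =
      fun t => (if t = i then zeta r ^ l else 1) * (if t = j then (zeta r ^ l)⁻¹ else 1) := by
    funext t
    by_cases h1 : t = i <;> by_cases h2 : t = j
    · exact absurd (h1.symm.trans h2) hij
    · simp [zijWt, h1, h2, hij]
    · simp [zijWt, h1, h2, hij, Ne.symm hij]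
    · simp [zijWt, h1, h2]
  rw [hfun, Finset.prod_mul_distrib, Finset.prod_ite_eq' Finset.univ i,
    Finset.prod_ite_eq' Finset.univ j]
  simp [mul_inv_cancel₀ (pow_ne_zero l (zeta_ne_zero r))]

lemma zij_mem_GSet (r p n l : ℕ) (hr : 0 < r) (i j : Fin n) (hij : i ≠ j) :
    zijMat n r l i j ∈ GSet r p n := by
  refine ⟨Equiv.swap i j, zijWt r l i j, zijWt_pow hr i j, ?_, rfl⟩
  rw [zijWt_prod hij, one_pow]

/-- A monomial matrix with nonzero weights, as an element of `GL_n(ℂ)`. -/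
def monoUnit (n : ℕ) (π : Equiv.Perm (Fin n)) (a : Fin n → ℂ) (ha : ∀ i, a i ≠ 0) :
    GLn n where
  val := monoMat n π a
  inv := monoMat n π⁻¹ (fun j => (a (π⁻¹ j))⁻¹)
  val_inv := monoMat_mul_inv n π a ha
  inv_val := by
    simp only [monoMat_mul]
    rw [inv_mul_cancel,
      show (fun j => (a (π⁻¹ (π j)))⁻¹ * a j) = fun _ : Fin n => (1 : ℂ) from
        funext fun j => by rw [← Equiv.Perm.mul_apply, inv_mul_cancel, Equiv.Perm.one_apply, inv_mul_cancel₀ (ha _)],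
      monoMat_one]

/-- The element `ζ_i^l ζ_j^{-l} s_{ij}` of `G(r,p,n)`. -/
def zijG (r p n l : ℕ) (hr : 0 < r) (i j : Fin n) (hij : i ≠ j) : ↥(GGroup r p n hr) :=
  ⟨monoUnit n (Equiv.swap i j) (zijWt r l i j) (zijWt_ne_zero r l i j),
   zij_mem_GSet r p n l hr i j hij⟩

/-- The element `κ_{r,n} = (1/r)·Σ_{l<r} Σ_{i<j} ζ_i^l ζ_j^{-l} s_{ij}` of the group
algebra `ℂ[G(r,p,n)]`. -/
def kappaGA (r p n : ℕ) (hr : 0 < r) : MonoidAlgebra ℂ ↥(GGroup r p n hr) :=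
  (1 / (r : ℂ)) • ∑ l ∈ Finset.range r, ∑ i : Fin n, ∑ j : Fin n,
    if h : i < j then MonoidAlgebra.single (zijG r p n l hr i j h.ne) 1 else 0

lemma zijL_last (r l : ℕ) {n : ℕ} (hn : 0 < n) (i j : Fin n)
    (hi : i ≠ lastIdx n hn) (hj : j ≠ lastIdx n hn) :
    zijMat n r l i j (lastIdx n hn) (lastIdx n hn) ≠ 0 := by
  have hswap : Equiv.swap i j (lastIdx n hn) = lastIdx n hn :=
    Equiv.swap_apply_of_ne_of_ne (Ne.symm hi) (Ne.symm hj)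
  rw [zijMat, monoMat_last_entry hn _ _ hswap]
  exact zijWt_ne_zero r l i j _

/-- The element `ζ_i^l ζ_j^{-l} s_{ij}` of `L(r,p,n)`, for `i, j ≤ n-1`. -/
def zijL (r p n l : ℕ) (hr : 0 < r) (hn : 0 < n) (i j : Fin n) (hij : i ≠ j)
    (hi : i ≠ lastIdx n hn) (hj : j ≠ lastIdx n hn) : ↥(LGroup r p n hr hn) :=
  ⟨monoUnit n (Equiv.swap i j) (zijWt r l i j) (zijWt_ne_zero r l i j),
   ⟨zij_mem_GSet r p n l hr i j hij, zijL_last r l hn i j hi hj⟩⟩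

/-- The element `κ_{r,n-1} = (1/r)·Σ_{l<r} Σ_{1≤i<j≤n-1} ζ_i^l ζ_j^{-l} s_{ij}` of the
group algebra `ℂ[L(r,p,n)]`. -/
def kappaLA (r p n : ℕ) (hr : 0 < r) (hn : 0 < n) :
    MonoidAlgebra ℂ ↥(LGroup r p n hr hn) :=
  (1 / (r : ℂ)) • ∑ l ∈ Finset.range r, ∑ i : Fin n, ∑ j : Fin n,
    if h : i < j ∧ (j : ℕ) < n - 1 then
      MonoidAlgebra.single
        (zijL r p n l hr hn i j h.1.ne
          (by
            refine Fin.ne_of_val_ne ?_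
            have h1 : (i : ℕ) < (j : ℕ) := h.1
            have h2 : (j : ℕ) < n - 1 := h.2
            show (i : ℕ) ≠ n - 1
            omega)
          (by
            refine Fin.ne_of_val_ne ?_
            have h2 : (j : ℕ) < n - 1 := h.2
            show (j : ℕ) ≠ n - 1
            omega)) 1
    else 0

/-! ## The induced representation of statement on `Ind_L^G σ` -/

/-- The right regular representation of a group `G` on the space of functions
`G → ℂ`, given by `(x · f)(g) = f(g x)`. -/
def regRep (G : Type*) [Group G] : Representation ℂ G (G → ℂ) where
  toFun x :=
    { toFun := fun f => fun g => f (g * x)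
      map_add' := fun f g => rfl
      map_smul' := fun c f => rfl }
  map_one' := by
    refine LinearMap.ext fun f => ?_
    funext g
    simp
  map_mul' x y := by
    refine LinearMap.ext fun f => ?_
    funext g
    simp [Module.End.mul_apply, mul_assoc]

/-- The space of functions `f : G(r,p,n) → ℂ` with `f(hg) = σ(h)·f(g)` for all
`h ∈ L(r,p,n)`, where `σ(h)` is the `(n,n)` entry of `h`. -/
def IndSig (r p n : ℕ) (hr : 0 < r) (hn : 0 < n) :
    Submodule ℂ (↥(GGroup r p n hr) → ℂ) where
  carrier := {f | ∀ h g : ↥(GGroup r p n hr),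
    ((h : GLn n) : Matrix (Fin n) (Fin n) ℂ) ∈ LSet r p n hn →
    f (h * g) = ((h : GLn n) : Matrix (Fin n) (Fin n) ℂ) (lastIdx n hn) (lastIdx n hn) * f g}
  add_mem' := by
    intro a b ha hb h g hh
    simp [ha h g hh, hb h g hh, mul_add]
  zero_mem' := by intro h g hh; simp
  smul_mem' := by
    intro c a ha h g hh
    simp [ha h g hh]
    ring

lemma IndSig_invariant (r p n : ℕ) (hr : 0 < r) (hn : 0 < n) :
    RepInvariant (regRep ↥(GGroup r p n hr)) (IndSig r p n hr hn) := by
  intro x f hf h g hh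
  show f ((h * g) * x) = _ * f (g * x)
  rw [mul_assoc]
  exact hf h (g * x) hh

/-- The natural representation of `G(r,p,n)` on `ℂ^n` by matrix-vector
multiplication. -/
def natRep (r p n : ℕ) (hr : 0 < r) : Representation ℂ ↥(GGroup r p n hr) (Fin n → ℂ) where
  toFun g := Matrix.mulVecLin ((g : GLn n) : Matrix (Fin n) (Fin n) ℂ)
  map_one' := by
    simp only [OneMemClass.coe_one, Units.val_one, Matrix.mulVecLin_one]
    rfl
  map_mul' g h := by
    simp only [Subgroup.coe_mul, Units.val_mul, Matrix.mulVecLin_mul]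
    rw [Module.End.mul_eq_comp]

/-! ## The operators `Z_{t,r}` and `Z_{t+1/2,r}` -/

/-- `S ∪ S′` as a finite subset of `Fin t ⊕ Fin t`. -/
def SSfin {t : ℕ} (S : Finset (Fin t)) : Finset (Fin t ⊕ Fin t) :=
  Finset.univ.filter fun x => Sum.elim (· ∈ S) (· ∈ S) x

/-- The set partition `b_S` with blocks `S ∪ S′` and `{l,l′}` for `l ∉ S`. -/
def bS {t : ℕ} (S : Finset (Fin t)) : SP t :=
  Setoid.ker fun x : Fin t ⊕ Fin t =>
    if x ∈ SSfin S then (none : Option (Fin t ⊕ Fin t)) else some x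

/-- The set partition `d_I` with blocks `I`, `(S ∪ S′) \ I` and `{l,l′}` for `l ∉ S`. -/
def dI {t : ℕ} (S : Finset (Fin t)) (I : Finset (Fin t ⊕ Fin t)) : SP t :=
  Setoid.ker fun x : Fin t ⊕ Fin t =>
    if x ∈ I then (Sum.inl true : Bool ⊕ (Fin t ⊕ Fin t))
    else if x ∈ SSfin S then Sum.inl false else Sum.inr x

/-- `N(I)` : the number of top-row (unprimed) elements of `I`. -/
def NIc {t : ℕ} (I : Finset (Fin t ⊕ Fin t)) : ℕ :=
  (I.filter fun x => x.isLeft = true).card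

/-- `M(I)` : the number of bottom-row (primed) elements of `I`. -/
def MIc {t : ℕ} (I : Finset (Fin t ⊕ Fin t)) : ℕ :=
  (I.filter fun x => x.isRight = true).card

/-- The operator `Z_{t,r}` on `V^{⊗t}`.  The inner sum over unordered partitions
`{I, (S∪S′)∖I}` (each counted once) is written as `1/2` times the sum over ordered
proper nonempty subsets `I` of `S ∪ S′`; these agree since `d_I = d_{(S∪S′)∖I}` and
the signs coincide. -/
def Zop (r n t : ℕ) : TP n t →ₗ[ℂ] TP n t :=
  (n.choose 2 : ℂ) • LinearMap.id +
  ∑ S ∈ (Finset.univ : Finset (Fin t)).powerset.filter (fun S => S ≠ ∅),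
    ((-1 : ℂ) ^ S.card) •
      (((n : ℂ) - 1) • phiD n t (bS S) +
        (1 / 2 : ℂ) •
          ∑ I ∈ (SSfin S).powerset.filter (fun I =>
              I ≠ ∅ ∧ I ≠ SSfin S ∧ ((NIc I : ℤ) ≡ (MIc I : ℤ) [ZMOD (r : ℤ)])),
            ((-1 : ℂ) ^ ((NIc I : ℤ) - (MIc I : ℤ))) • (phiD n t (dI S I) - phiD n t (bS S)))

/-- The operator `Z_{k+1/2,r}` on `V^{⊗(k+1)}`; as in `Zop`, but for `S` containing
`k+1` the inner sum is restricted to partitions in which `k+1` and `(k+1)′` lie in the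
same part. -/
def ZopHalf (r n k : ℕ) : TP n (k + 1) →ₗ[ℂ] TP n (k + 1) :=
  (n.choose 2 : ℂ) • LinearMap.id +
  ∑ S ∈ (Finset.univ : Finset (Fin (k + 1))).powerset.filter (fun S => S ≠ ∅),
    ((-1 : ℂ) ^ S.card) •
      (((n : ℂ) - 1) • phiD n (k + 1) (bS S) +
        (1 / 2 : ℂ) •
          ∑ I ∈ (SSfin S).powerset.filter (fun I =>
              I ≠ ∅ ∧ I ≠ SSfin S ∧ ((NIc I : ℤ) ≡ (MIc I : ℤ) [ZMOD (r : ℤ)]) ∧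
              (Fin.last k ∈ S →
                ((Sum.inl (Fin.last k) : Fin (k+1) ⊕ Fin (k+1)) ∈ I ↔
                  (Sum.inr (Fin.last k) : Fin (k+1) ⊕ Fin (k+1)) ∈ I))),
            ((-1 : ℂ) ^ ((NIc I : ℤ) - (MIc I : ℤ))) •
              (phiD n (k + 1) (dI S I) - phiD n (k + 1) (bS S)))

/-- The diagonal action of `κ_{r,n}` on `V^{⊗k}`. -/
def kappaOpFull (r n k : ℕ) : TP n k →ₗ[ℂ] TP n k :=
  (1 / (r : ℂ)) • ∑ l ∈ Finset.range r, ∑ i : Fin n, ∑ j : Fin n,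
    if i < j then tensorPow n k (zijMat n r l i j) else 0

/-- The diagonal action of `κ_{r,n-1}` on `V^{⊗(k+1)}`. -/
def kappaOpL (r n k : ℕ) : TP n (k + 1) →ₗ[ℂ] TP n (k + 1) :=
  (1 / (r : ℂ)) • ∑ l ∈ Finset.range r, ∑ i : Fin n, ∑ j : Fin n,
    if i < j ∧ (j : ℕ) < n - 1 then tensorPow n (k + 1) (zijMat n r l i j) else 0

/-- `w ⊗ v_n ∈ V^{⊗(k+1)}` for `w ∈ V^{⊗k}`. -/
def extendLast (n k : ℕ) (hn : 0 < n) (w : TP n k) : TP n (k + 1) :=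
  fun j => if j (Fin.last k) = lastIdx n hn then w (fun t => j t.castSucc) else 0

/-- `A ⊗ Id_{V^{⊗(l-j)}}` : the extension of an operator on `V^{⊗j}` to `V^{⊗l}`,
acting on the first `j` tensor factors. -/
def extendOp (n j l : ℕ) (hjl : j ≤ l) (A : TP n j →ₗ[ℂ] TP n j) :
    TP n l →ₗ[ℂ] TP n l where
  toFun f := fun u =>
    A (fun x : Fin j → Fin n =>
        f (fun t : Fin l => if h : (t : ℕ) < j then x ⟨t, h⟩ else u t))
      (fun s : Fin j => u (Fin.castLE hjl s))
  map_add' f g := by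
    funext u
    show A (fun x : Fin j → Fin n =>
        (f + g) (fun t : Fin l => if h : (t : ℕ) < j then x ⟨t, h⟩ else u t))
      (fun s : Fin j => u (Fin.castLE hjl s)) =
      A (fun x : Fin j → Fin n =>
        f (fun t : Fin l => if h : (t : ℕ) < j then x ⟨t, h⟩ else u t))
      (fun s : Fin j => u (Fin.castLE hjl s)) +
      A (fun x : Fin j → Fin n =>
        g (fun t : Fin l => if h : (t : ℕ) < j then x ⟨t, h⟩ else u t))
      (fun s : Fin j => u (Fin.castLE hjl s))
    have h : (fun x : Fin j → Fin n =>
        (f + g) (fun t : Fin l => if h : (t : ℕ) < j then x ⟨t, h⟩ else u t)) =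
      (fun x : Fin j → Fin n =>
        f (fun t : Fin l => if h : (t : ℕ) < j then x ⟨t, h⟩ else u t)) +
      (fun x : Fin j → Fin n =>
        g (fun t : Fin l => if h : (t : ℕ) < j then x ⟨t, h⟩ else u t)) := rfl
    rw [h, map_add]
    rfl
  map_smul' c f := by
    funext u
    show A (fun x : Fin j → Fin n =>
        (c • f) (fun t : Fin l => if h : (t : ℕ) < j then x ⟨t, h⟩ else u t))
      (fun s : Fin j => u (Fin.castLE hjl s)) =
      c • (A (fun x : Fin j → Fin n =>
        f (fun t : Fin l => if h : (t : ℕ) < j then x ⟨t, h⟩ else u t))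
      (fun s : Fin j => u (Fin.castLE hjl s)))
    have h : (fun x : Fin j → Fin n =>
        (c • f) (fun t : Fin l => if h : (t : ℕ) < j then x ⟨t, h⟩ else u t)) =
      c • (fun x : Fin j → Fin n =>
        f (fun t : Fin l => if h : (t : ℕ) < j then x ⟨t, h⟩ else u t)) := rfl
    rw [h, _root_.map_smul]
    rfl

/-! ## Diagram multiplication (statement of the structure constants) -/

/-- The bottom row of `d₁` matches the top row of `d₂`. -/
def rowMatch (k : ℕ) (d1 d2 : SP k) : Prop :=
  ∀ i j : Fin k, d1.r (Sum.inr i) (Sum.inr j) ↔ d2.r (Sum.inl i) (Sum.inl j)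

/-- Extend a setoid on `α` along an injection `e : α → β` by singleton classes on
the complement of the range. -/
def extendSetoid {α β : Type*} (e : α → β) (he : Function.Injective e)
    (d : Setoid α) : Setoid β where
  r x y := x = y ∨ ∃ a b, d.r a b ∧ x = e a ∧ y = e b
  iseqv := by
    constructor
    · intro x; exact Or.inl rfl
    · rintro x y (rfl | ⟨a, b, hab, rfl, rfl⟩)
      · exact Or.inl rfl
      · exact Or.inr ⟨b, a, d.iseqv.symm hab, rfl, rfl⟩
    · rintro x y z (rfl | ⟨a, b, hab, rfl, rfl⟩) h2
      · exact h2
      · rcases h2 with rfl | ⟨a', b', hab', hy, rfl⟩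
        · exact Or.inr ⟨a, b, hab, rfl, rfl⟩
        · have hba : b = a' := he hy
          exact Or.inr ⟨a, b', d.iseqv.trans hab (hba ▸ hab'), rfl, rfl⟩

/-- The three-row vertex set: top row, middle row, bottom row. -/
abbrev T3 (k : ℕ) : Type := Fin k ⊕ (Fin k ⊕ Fin k)

/-- `d₁` placed on the top and middle rows. -/
def embT (k : ℕ) : Fin k ⊕ Fin k → T3 k := Sum.map id Sum.inl

/-- `d₂` placed on the middle and bottom rows. -/
def embB (k : ℕ) : Fin k ⊕ Fin k → T3 k := Sum.inr

/-- The outer (top and bottom) rows. -/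
def embO (k : ℕ) : Fin k ⊕ Fin k → T3 k := Sum.map id Sum.inr

lemma embT_inj (k : ℕ) : Function.Injective (embT k) :=
  Function.Injective.sumMap Function.injective_id Sum.inl_injective

/-- The stacked three-row diagram : the join of `d₁` (on top∪middle) and `d₂`
(on middle∪bottom); its classes are the connected components. -/
def stacked (k : ℕ) (d1 d2 : SP k) : Setoid (T3 k) :=
  extendSetoid (embT k) (embT_inj k) d1 ⊔ extendSetoid (embB k) Sum.inr_injective d2

/-- The concatenation `d₁ ∘ d₂`, i.e. the restriction of the stacked diagram to the
outer rows. -/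
def compSetoid (k : ℕ) (d1 d2 : SP k) : SP k :=
  Setoid.comap (embO k) (stacked k d1 d2)

/-- `[d₁ ∘ d₂]` : the number of connected components of the stacked diagram contained
entirely in the middle row. -/
def midCount (k : ℕ) (d1 d2 : SP k) : ℕ :=
  Nat.card {q : Quotient (stacked k d1 d2) //
    ∀ x : T3 k, Quotient.mk (stacked k d1 d2) x = q → ∃ i : Fin k, x = Sum.inr (Sum.inl i)}

/-- A block entirely contained in the top row. -/
def topOnly {k : ℕ} (d : SP k) (q : Quotient d) : Prop :=
  ∀ x, Quotient.mk d x = q → ∃ i : Fin k, x = Sum.inl i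

/-- A block entirely contained in the bottom row. -/
def botOnly {k : ℕ} (d : SP k) (q : Quotient d) : Prop :=
  ∀ x, Quotient.mk d x = q → ∃ i : Fin k, x = Sum.inr i

/-- `x` lies in the block merged from the pair `pr = (q₁, q₂)`. -/
def memPair {k : ℕ} (d1 d2 : SP k) : Fin k ⊕ Fin k → Quotient d1 × Quotient d2 → Prop
  | Sum.inl i, pr => Quotient.mk d1 (Sum.inl i) = pr.1
  | Sum.inr i, pr => Quotient.mk d2 (Sum.inr i) = pr.2

/-- `d` is obtained from `d₁ ∘ d₂` by choosing an injective partial matching between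
the top-only blocks of `d₁` and the bottom-only blocks of `d₂` and merging each
matched pair into a single block. -/
def IsCoarsening (k : ℕ) (d1 d2 d : SP k) : Prop :=
  ∃ P : Finset (Quotient d1 × Quotient d2),
    (∀ pr ∈ P, topOnly d1 pr.1 ∧ botOnly d2 pr.2) ∧
    (∀ pr ∈ P, ∀ pr' ∈ P, pr.1 = pr'.1 → pr = pr') ∧
    (∀ pr ∈ P, ∀ pr' ∈ P, pr.2 = pr'.2 → pr = pr') ∧
    (∀ x y : Fin k ⊕ Fin k, d.r x y ↔
      ((compSetoid k d1 d2).r x y ∨ ∃ pr ∈ P, memPair d1 d2 x pr ∧ memPair d1 d2 y pr))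

/-- The (integer) falling factorial `(a)_b = a(a-1)⋯(a-b+1)`. -/
def fallingC (a : ℤ) (b : ℕ) : ℤ := ∏ i ∈ Finset.range b, (a - i)

/-! ## The elements `c₁, c₂` of `G(2,2,2k)` and the operator `M_{k,2,2}` -/

/-- The underlying function of the permutation `(1 2)(3 4)⋯(2k-1 2k)` of `Fin (2k)`:
it swaps `2t` and `2t+1` (0-indexed) for each `t < k`. -/
def pairFn (k : ℕ) : Fin (2 * k) → Fin (2 * k) := fun x =>
  if _ : (x : ℕ) % 2 = 0 then ⟨(x : ℕ) + 1, by have := x.2; omega⟩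
  else ⟨(x : ℕ) - 1, by have := x.2; omega⟩

lemma pairFn_invol (k : ℕ) : Function.Involutive (pairFn k) := by
  intro x
  unfold pairFn
  split_ifs with h1 h2 h3
  · refine Fin.ext ?_; simp only [Fin.val_mk] at h2 ⊢; omega
  · refine Fin.ext ?_; simp only [Fin.val_mk] at h2 ⊢; omega
  · refine Fin.ext ?_; simp only [Fin.val_mk] at h3 ⊢; omega
  · refine Fin.ext ?_; simp only [Fin.val_mk] at h3 ⊢; omega

/-- The permutation `(1 2)(3 4)⋯(2k-1 2k)` of `Fin (2k)`. -/
def pairPerm (k : ℕ) : Equiv.Perm (Fin (2 * k)) :=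
  Function.Involutive.toPerm (pairFn k) (pairFn_invol k)

/-- `c₂` : the permutation matrix of `(1 2)(3 4)⋯(2k-1 2k)`. -/
def c2Mat (k : ℕ) : Matrix (Fin (2 * k)) (Fin (2 * k)) ℂ :=
  monoMat (2 * k) (pairPerm k) (fun _ => 1)

/-- The diagonal matrix `diag(-1,-1,1,…,1)`. -/
def dMat (k : ℕ) : Matrix (Fin (2 * k)) (Fin (2 * k)) ℂ :=
  Matrix.diagonal fun t => if (t : ℕ) < 2 then (-1 : ℂ) else 1

/-- `c₁ = D · c₂`. -/
def c1Mat (k : ℕ) : Matrix (Fin (2 * k)) (Fin (2 * k)) ℂ := dMat k * c2Mat k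

/-- Two matrices are conjugate by an element of `G(r,p,n)`. -/
def conjIn (r p n : ℕ) (c x : Matrix (Fin n) (Fin n) ℂ) : Prop :=
  ∃ g ∈ GSet r p n, g * c = x * g

/-- The conjugacy class of `c` in `G(r,p,n)`. -/
def conjClass (r p n : ℕ) (c : Matrix (Fin n) (Fin n) ℂ) :
    Set (Matrix (Fin n) (Fin n) ℂ) :=
  {h | h ∈ GSet r p n ∧ conjIn r p n c h}

/-- The set partition of `{1,…,k,1′,…,k′}` all of whose blocks are singletons. -/
def singletonSP (k : ℕ) : SP k := ⟨Eq, eq_equivalence⟩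

/-- The operator `M_{k,2,2} = φ_k(x_{d₀})` on `(ℂ^{2k})^{⊗k}`, where `d₀` is the set
partition with all blocks singletons. -/
def Mop (k : ℕ) : TP (2 * k) k →ₗ[ℂ] TP (2 * k) k :=
  phiX (2 * k) k (singletonSP k)

/-!
A linear endomorphism `F` of `V^{⊗k}` is determined by its coefficients `entry F c`, indexed by
colourings `c : {1,…,k,1′,…,k′} → {1,…,n}`, and `φ_k(x_d)` is the indicator of the colourings
whose kernel is `d`. Commuting with the permutation matrices of `G(r,p,n)` says that `entry F c`
depends only on `ker c`, so `F` is a combination of the `φ_k(x_d)` with at most `n` blocks; those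
with more blocks vanish, and when `n ≥ 2k` every `d` is a kernel, which gives linear independence.

Commuting with `diag(a)` multiplies `entry F c` by `∏_B a_B^{N(B)}` on one side and by
`∏_B a_B^{M(B)}` on the other. Writing `a = ζ^b`, the diagonal matrices of `G(r,p,n)` correspond to
the integer vectors `b` with `p ∣ ∑ b`, so `φ_k(x_d)` is invariant iff
`r ∣ ∑_B (M(B) - N(B)) b_B` for all such `b`. Testing `b = p e_i`, `e_i - e_j` and `e_i - e_w`
(with `w` labelling no block) shows that this is exactly `d ∈ Π_k(r) ∪ Λ_k(r,p,n)`.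
-/

lemma ker_comp_injective {α β γ : Type*} {f : β → γ} (hf : Function.Injective f) (c : α → β) :
    Setoid.ker (f ∘ c) = Setoid.ker c :=
  Setoid.ext fun _ _ => hf.eq_iff

lemma exists_perm_comp_eq_of_ker_eq {α β : Type*} [Finite α] {c c' : α → β}
    (h : Setoid.ker c = Setoid.ker c') : ∃ π : Equiv.Perm β, π ∘ c = c' := by
  have hlift : ∀ a b, Setoid.ker c a b → c' a = c' b := fun a b hab => by rwa [h] at hab
  obtain ⟨π, hπ⟩ := Equiv.Perm.exists_extending_pair (Setoid.kerLift c)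
    (Quotient.lift c' hlift) (Setoid.kerLift_injective c) fun x y => by
      induction x using Quotient.inductionOn
      induction y using Quotient.inductionOn
      intro hxy
      exact Quotient.sound (by rw [h]; exact hxy)
  exact ⟨π, funext fun a => hπ ⟦a⟧⟩

instance {α : Type*} [Finite α] : Fintype (Setoid α) :=
  have : Finite (Setoid α) := Finite.of_injective (fun d : Setoid α => d.r) fun d d' h =>
    Setoid.ext fun a b => by rw [show d.r = d'.r from h]
  Fintype.ofFinite _

lemma sum_comp_eq_sum_card_smul {ι κ M : Type*} [Fintype ι] [Fintype κ] [AddCommMonoid M]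
    (g : ι → κ) (f : κ → M) : ∑ t, f (g t) = ∑ q, Nat.card {t // g t = q} • f q := by
  rw [← Finset.sum_fiberwise Finset.univ g]
  refine Finset.sum_congr rfl fun q _ => ?_
  rw [Finset.sum_congr rfl fun t ht => congrArg f (Finset.mem_filter.mp ht).2, Finset.sum_const,
    Nat.card_eq_fintype_card, Fintype.card_subtype]

lemma prod_zpow_eq_zpow_sum {G₀ ι : Type*} [CommGroupWithZero G₀] {x : G₀} (hx : x ≠ 0)
    (s : Finset ι) (f : ι → ℤ) : ∏ i ∈ s, x ^ f i = x ^ (∑ i ∈ s, f i) := by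
  induction s using Finset.induction with
  | empty => simp
  | insert i s hi ih => rw [Finset.sum_insert hi, Finset.prod_insert hi, zpow_add₀ hx, ih]

theorem forall_prod_eq_iff_forall_dvd {ι β : Type*} [Fintype ι] [Fintype β] {r p : ℕ}
    (hr : 0 < r) (hpr : p ∣ r) (x y : ι → β) :
    (∀ a : β → ℂ, (∀ i, a i ^ r = 1) → (∏ i, a i) ^ (r / p) = 1 →
        ∏ t, a (x t) = ∏ t, a (y t)) ↔
      ∀ b : β → ℤ, (p : ℤ) ∣ ∑ i, b i → (r : ℤ) ∣ ∑ t, b (y t) - ∑ t, b (x t) := by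
  have : NeZero r := ⟨hr.ne'⟩
  have hζ : IsPrimitiveRoot (zeta r) r := Complex.isPrimitiveRoot_exp r hr.ne'
  have hζ0 := zeta_ne_zero r
  have hpow_eq : ∀ u w : ℤ, zeta r ^ u = zeta r ^ w ↔ (r : ℤ) ∣ w - u := fun u w => by
    rw [← hζ.zpow_eq_one_iff_dvd, zpow_sub₀ hζ0, div_eq_one_iff_eq (zpow_ne_zero _ hζ0), eq_comm]
  have hpow_div : ∀ S : ℤ, (zeta r ^ S) ^ (r / p) = 1 ↔ (p : ℤ) ∣ S := fun S => by
    obtain ⟨m, rfl⟩ := hpr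
    have hm : (m : ℤ) ≠ 0 := by exact_mod_cast (Nat.pos_of_mul_pos_left hr).ne'
    rw [Nat.mul_div_cancel_left m (Nat.pos_of_mul_pos_right hr), ← zpow_natCast,
      ← _root_.zpow_mul, hζ.zpow_eq_one_iff_dvd, Nat.cast_mul]
    exact ⟨Int.dvd_of_mul_dvd_mul_right hm, fun h => mul_dvd_mul_right h _⟩
  constructor
  · intro h b hb
    have hroot : ∀ i, (zeta r ^ b i) ^ r = 1 := fun i => by
      rw [← zpow_natCast, ← _root_.zpow_mul, mul_comm, _root_.zpow_mul, hζ.zpow_eq_one,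
        _root_.one_zpow]
    have := h (fun i => zeta r ^ b i) hroot (by rw [prod_zpow_eq_zpow_sum hζ0, hpow_div]; exact hb)
    rwa [prod_zpow_eq_zpow_sum hζ0, prod_zpow_eq_zpow_sum hζ0, hpow_eq] at this
  · intro h a ha hpa
    choose b hb using fun i => hζ.eq_pow_of_pow_eq_one (ha i)
    have ha' : ∀ i, a i = zeta r ^ (b i : ℤ) := fun i => by rw [zpow_natCast, (hb i).2]
    simp only [ha', prod_zpow_eq_zpow_sum hζ0, hpow_div] at hpa ⊢
    rw [hpow_eq]
    exact h _ hpa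

section WeightedSums

variable {ι β : Type*} [Fintype ι] {v : ι → β} {e : ι → ℤ} {r p m : ℤ}

lemma sum_mul_single_comp (hv : Function.Injective v) (q : ι) (x : ℤ) :
    ∑ q', e q' * (Pi.single (v q) x : β → ℤ) (v q') = e q * x := by
  simp [Pi.single_apply, hv.eq_iff]

lemma sum_mul_single_comp_of_notMem_range {w : β} (hw : w ∉ Set.range v) (x : ℤ) :
    ∑ q, e q * (Pi.single w x : β → ℤ) (v q) = 0 :=
  Finset.sum_eq_zero fun q _ => by rw [Pi.single_eq_of_ne (fun h => hw ⟨q, h⟩), mul_zero]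

lemma dvd_sum_mul_of_bijective [Fintype β] (hv : Function.Bijective v) (hrpm : r = p * m)
    (hm : ∀ q, m ∣ e q) (he : ∀ q q', r ∣ e q - e q') {b : β → ℤ} (hb : p ∣ ∑ i, b i) :
    r ∣ ∑ q, e q * b (v q) := by
  rcases isEmpty_or_nonempty ι with hι | ⟨⟨q₀⟩⟩
  · simp
  have hsplit : ∑ q, e q * b (v q) = ∑ q, (e q - e q₀) * b (v q) + e q₀ * ∑ i, b i := by
    rw [← Equiv.sum_comp (Equiv.ofBijective v hv) b, Finset.mul_sum, ← Finset.sum_add_distrib]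
    simp [sub_mul]
  rw [hsplit, hrpm]
  refine dvd_add (Finset.dvd_sum fun q _ => dvd_mul_of_dvd_left (hrpm ▸ he q q₀) _) ?_
  rw [mul_comm p]
  exact mul_dvd_mul (hm q₀) hb

variable [Fintype β]

lemma dvd_of_forall_dvd_sum_mul (hT : ∀ b : β → ℤ, p ∣ ∑ i, b i → r ∣ ∑ q, e q * b (v q))
    (hv : Function.Injective v) (hrpm : r = p * m) (hp : p ≠ 0) (q : ι) : m ∣ e q := by
  have := hT (Pi.single (v q) p) (by simp)
  rw [sum_mul_single_comp hv, hrpm, mul_comm p] at this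
  exact Int.dvd_of_mul_dvd_mul_right hp this

lemma dvd_sub_of_forall_dvd_sum_mul (hT : ∀ b : β → ℤ, p ∣ ∑ i, b i → r ∣ ∑ q, e q * b (v q))
    (hv : Function.Injective v) (q q' : ι) : r ∣ e q - e q' := by
  have := hT (Pi.single (v q) 1 - Pi.single (v q') 1) (by simp [Finset.sum_sub_distrib])
  simpa [mul_sub, Finset.sum_sub_distrib, sum_mul_single_comp hv] using this

lemma dvd_of_forall_dvd_sum_mul_of_notMem_range
    (hT : ∀ b : β → ℤ, p ∣ ∑ i, b i → r ∣ ∑ q, e q * b (v q))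
    (hv : Function.Injective v) {w : β} (hw : w ∉ Set.range v) (q : ι) : r ∣ e q := by
  have := hT (Pi.single (v q) 1 - Pi.single w 1) (by simp [Finset.sum_sub_distrib])
  simpa [mul_sub, Finset.sum_sub_distrib, sum_mul_single_comp hv,
    sum_mul_single_comp_of_notMem_range hw] using this

end WeightedSums

section Entries

variable {n k : ℕ}

/-- Matrix coefficients of `F`, indexed by colourings of `{1,…,k,1′,…,k′}`: the input tuple is
read off `Sum.inl`, the output tuple off `Sum.inr`. -/
def entry (F : TP n k →ₗ[ℂ] TP n k) (c : Fin k ⊕ Fin k → Fin n) : ℂ :=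
  F (Pi.single (c ∘ Sum.inl) 1) (c ∘ Sum.inr)

lemma ext_entry {F G : TP n k →ₗ[ℂ] TP n k} (h : ∀ c, entry F c = entry G c) : F = G :=
  (Pi.basisFun ℂ (Fin k → Fin n)).ext fun i => funext fun o => by
    simpa [entry] using h (Sum.elim i o)

lemma entry_sum_smul {ι : Type*} (s : Finset ι) (g : ι → ℂ) (G : ι → TP n k →ₗ[ℂ] TP n k)
    (c : Fin k ⊕ Fin k → Fin n) :
    entry (∑ i ∈ s, g i • G i) c = ∑ i ∈ s, g i * entry (G i) c := by
  simp [entry, LinearMap.sum_apply, Finset.sum_apply]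

lemma kernelMap_single_apply (K : (Fin k → Fin n) → (Fin k → Fin n) → ℂ)
    (i o : Fin k → Fin n) : kernelMap n k K (Pi.single i 1) o = K o i := by
  simp [kernelMap, Pi.single_apply]

lemma coeX_eq_ite (d : SP k) (c : Fin k ⊕ Fin k → Fin n) :
    coeX n k d c = if Setoid.ker c = d then 1 else 0 := by
  simp only [coeX, Setoid.ext_iff, Setoid.ker_def, eq_comm (a := Setoid.ker c)]

lemma entry_phiX (d : SP k) (c : Fin k ⊕ Fin k → Fin n) :
    entry (phiX n k d) c = if Setoid.ker c = d then 1 else 0 := by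
  rw [entry, phiX, kernelMap_single_apply, Sum.elim_comp_inl_inr, coeX_eq_ite]

lemma tensorPow_monoMat_apply (π : Equiv.Perm (Fin n)) (a : Fin n → ℂ) (f : TP n k)
    (o : Fin k → Fin n) :
    tensorPow n k (monoMat n π a) f o = (∏ t, a (π.symm (o t))) * f (π.symm ∘ o) := by
  have hprod : ∀ j : Fin k → Fin n, ∏ t, monoMat n π a (o t) (j t) =
      if j = π.symm ∘ o then ∏ t, a (π.symm (o t)) else 0 := by
    intro j
    split_ifs with hj
    · subst hj
      simp [monoMat]
    · obtain ⟨t, ht⟩ := Function.ne_iff.mp hj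
      refine Finset.prod_eq_zero (Finset.mem_univ t) ?_
      simp only [monoMat, of_apply, ite_eq_right_iff]
      exact fun h => absurd (by simp [h]) ht
  simp [tensorPow, kernelMap, hprod]

lemma tensorPow_monoMat_single (π : Equiv.Perm (Fin n)) (a : Fin n → ℂ) (i : Fin k → Fin n) :
    tensorPow n k (monoMat n π a) (Pi.single i 1) = (∏ t, a (i t)) • Pi.single (π ∘ i) 1 := by
  funext o
  rw [tensorPow_monoMat_apply]
  by_cases h : o = π ∘ i
  · subst h
    simp [Function.comp_def]
  · have h' : π.symm ∘ o ≠ i := fun h' => h (by rw [← h']; ext; simp)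
    simp [h, h']

lemma commute_tensorPow_monoMat_iff (F : TP n k →ₗ[ℂ] TP n k) (π : Equiv.Perm (Fin n))
    (a : Fin n → ℂ) :
    F ∘ₗ tensorPow n k (monoMat n π a) = tensorPow n k (monoMat n π a) ∘ₗ F ↔
      ∀ c, entry F (π ∘ c) * ∏ t, a (c (Sum.inl t)) =
        (∏ t, a (c (Sum.inr t))) * entry F c := by
  constructor
  · intro h c
    have := congrArg (fun G => G (Pi.single (c ∘ Sum.inl) 1) (π ∘ c ∘ Sum.inr)) h
    simpa [entry, tensorPow_monoMat_single, tensorPow_monoMat_apply, Function.comp_def,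
      mul_comm] using this
  · intro h
    refine ext_entry fun c => ?_
    have := h (Sum.elim (c ∘ Sum.inl) (π.symm ∘ c ∘ Sum.inr))
    simpa [entry, tensorPow_monoMat_single, tensorPow_monoMat_apply, Function.comp_def,
      mul_comm] using this

end Entries

section Blocks

variable {r p n k : ℕ}

lemma nBlocks_le_two_mul (d : SP k) : nBlocks d ≤ 2 * k := by
  have := Nat.card_le_card_of_surjective _ (Quotient.mk_surjective (s := d))
  simpa [nBlocks, two_mul] using this

lemma nBlocks_ker_le (c : Fin k ⊕ Fin k → Fin n) : nBlocks (Setoid.ker c) ≤ n := by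
  simpa [nBlocks] using Nat.card_le_card_of_injective _ (Setoid.kerLift_injective c)

lemma nBlocks_ker_eq_iff_bijective (c : Fin k ⊕ Fin k → Fin n) :
    nBlocks (Setoid.ker c) = n ↔ Function.Bijective (Setoid.kerLift c) := by
  rw [Nat.bijective_iff_injective_and_card, Nat.card_fin, nBlocks]
  exact (and_iff_right (Setoid.kerLift_injective c)).symm

lemma exists_ker_eq_of_nBlocks_le {d : SP k} (hd : nBlocks d ≤ n) :
    ∃ c : Fin k ⊕ Fin k → Fin n, Setoid.ker c = d := by
  obtain ⟨e⟩ : Nonempty (Quotient d ↪ Fin n) := Function.Embedding.nonempty_of_card_le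
    (by simpa [nBlocks, Nat.card_eq_fintype_card] using hd)
  exact ⟨e ∘ Quotient.mk d, by rw [ker_comp_injective e.injective]; exact Setoid.ker_mk_eq d⟩

def blockWeight (d : SP k) (q : Quotient d) : ℤ := botCt d q - topCt d q

lemma modEq_iff_dvd_blockWeight (d : SP k) (q : Quotient d) (s : ℤ) :
    (topCt d q : ℤ) ≡ botCt d q [ZMOD s] ↔ s ∣ blockWeight d q :=
  Int.modEq_iff_dvd

lemma sub_modEq_iff_dvd_blockWeight_sub (d : SP k) (q q' : Quotient d) (s : ℤ) :
    (topCt d q : ℤ) - botCt d q ≡ (topCt d q' : ℤ) - botCt d q' [ZMOD s] ↔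
      s ∣ blockWeight d q - blockWeight d q' := by
  rw [Int.modEq_iff_dvd, blockWeight, blockWeight]
  ring_nf

lemma sum_inr_sub_sum_inl (c : Fin k ⊕ Fin k → Fin n) (b : Fin n → ℤ) :
    ∑ t, b (c (Sum.inr t)) - ∑ t, b (c (Sum.inl t)) =
      ∑ q, blockWeight (Setoid.ker c) q * b (Setoid.kerLift c q) := by
  have hrow := fun g : Fin k → Fin k ⊕ Fin k => sum_comp_eq_sum_card_smul
    (fun t => (⟦g t⟧ : Quotient (Setoid.ker c))) (b ∘ Setoid.kerLift c)
  simp only [Function.comp_apply, Setoid.kerLift_mk] at hrow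
  rw [hrow Sum.inl, hrow Sum.inr, ← Finset.sum_sub_distrib]
  simp only [blockWeight, topCt, botCt, nsmul_eq_mul, sub_mul]

theorem inA_ker_iff (hr : 0 < r) (hpr : p ∣ r) (c : Fin k ⊕ Fin k → Fin n) :
    inA r p n (Setoid.ker c) ↔ ∀ b : Fin n → ℤ, (p : ℤ) ∣ ∑ i, b i →
      (r : ℤ) ∣ ∑ q, blockWeight (Setoid.ker c) q * b (Setoid.kerLift c q) := by
  have hp : (p : ℤ) ≠ 0 := by exact_mod_cast (Nat.pos_of_dvd_of_pos hpr hr).ne'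
  have hrpm : (r : ℤ) = p * ((r / p : ℕ) : ℤ) := by
    exact_mod_cast (Nat.mul_div_cancel' hpr).symm
  have hv := Setoid.kerLift_injective c
  simp only [inA, inPi, inLambda, inTheta, modEq_iff_dvd_blockWeight,
    sub_modEq_iff_dvd_blockWeight_sub, nBlocks_ker_eq_iff_bijective]
  constructor
  · rintro (hPi | ⟨hbij, hm, he⟩ | ⟨hlt, -⟩) b hb
    · exact Finset.dvd_sum fun q _ => dvd_mul_of_dvd_left (hPi q) _
    · exact dvd_sum_mul_of_bijective hbij hrpm (fun q => (hm q).1) he hb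
    · exact absurd hlt (nBlocks_ker_le c).not_gt
  · intro hT
    by_cases hsurj : Function.Surjective (Setoid.kerLift c)
    · by_cases hall : ∀ q, (r : ℤ) ∣ blockWeight (Setoid.ker c) q
      · exact Or.inl hall
      obtain ⟨q₁, hq₁⟩ := not_forall.mp hall
      refine Or.inr (Or.inl ⟨⟨hv, hsurj⟩, fun q => ⟨dvd_of_forall_dvd_sum_mul hT hv hrpm hp q,
        fun hq => hq₁ ?_⟩, dvd_sub_of_forall_dvd_sum_mul hT hv⟩)
      simpa using dvd_add (dvd_sub_of_forall_dvd_sum_mul hT hv q₁ q) hq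
    · obtain ⟨w, hw⟩ := not_forall.mp hsurj
      exact Or.inl (dvd_of_forall_dvd_sum_mul_of_notMem_range hT hv hw)

theorem inA_ker_iff_forall_prod_eq (hr : 0 < r) (hpr : p ∣ r) (c : Fin k ⊕ Fin k → Fin n) :
    inA r p n (Setoid.ker c) ↔ ∀ a : Fin n → ℂ, (∀ i, a i ^ r = 1) →
      (∏ i, a i) ^ (r / p) = 1 → ∏ t, a (c (Sum.inl t)) = ∏ t, a (c (Sum.inr t)) := by
  rw [inA_ker_iff hr hpr, forall_prod_eq_iff_forall_dvd hr hpr]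
  simp only [sum_inr_sub_sum_inl]

end Blocks

section Centralizer

variable {r p n k : ℕ}

lemma centG_eq_centralizer :
    centG r p n k = Subalgebra.centralizer ℂ (tensorPow n k '' GSet r p n) := by
  ext F
  simp only [centG, Set.mem_ofPred_eq, SetLike.mem_coe, Subalgebra.mem_centralizer_iff,
    Set.forall_mem_image, Module.End.mul_eq_comp]
  exact forall₂_congr fun _ _ => eq_comm

lemma phiX_mem_centG (hr : 0 < r) (hpr : p ∣ r) {d : SP k} (hd : inA r p n d) :
    phiX n k d ∈ centG r p n k := by
  rintro _ ⟨π, a, ha, hpa, rfl⟩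
  refine (commute_tensorPow_monoMat_iff _ π a).mpr fun c => ?_
  rw [entry_phiX, entry_phiX, ker_comp_injective π.injective]
  split_ifs with h
  · subst h
    simpa using (inA_ker_iff_forall_prod_eq hr hpr c).mp hd a ha hpa
  · simp

lemma entry_perm_comp_of_mem_centG {F : TP n k →ₗ[ℂ] TP n k} (hF : F ∈ centG r p n k)
    (π : Equiv.Perm (Fin n)) (c : Fin k ⊕ Fin k → Fin n) : entry F (π ∘ c) = entry F c := by
  simpa using (commute_tensorPow_monoMat_iff F π 1).mp (hF _ ⟨π, 1, by simp, by simp, rfl⟩) c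

lemma inA_ker_of_entry_ne_zero (hr : 0 < r) (hpr : p ∣ r) {F : TP n k →ₗ[ℂ] TP n k}
    (hF : F ∈ centG r p n k) {c : Fin k ⊕ Fin k → Fin n} (hc : entry F c ≠ 0) :
    inA r p n (Setoid.ker c) := by
  refine (inA_ker_iff_forall_prod_eq hr hpr c).mpr fun a ha hpa => mul_left_cancel₀ hc ?_
  have := (commute_tensorPow_monoMat_iff F 1 a).mp (hF _ ⟨1, a, ha, hpa, rfl⟩) c
  simpa [mul_comm] using this

lemma mem_span_of_mem_centG (hr : 0 < r) (hpr : p ∣ r) {F : TP n k →ₗ[ℂ] TP n k}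
    (hF : F ∈ centG r p n k) : F ∈ Submodule.span ℂ (TanSet r p n k) := by
  have hfactor : Function.FactorsThrough (entry F) Setoid.ker := fun c c' h => by
    obtain ⟨π, rfl⟩ := exists_perm_comp_eq_of_ker_eq h
    exact (entry_perm_comp_of_mem_centG hF π c).symm
  obtain ⟨γ, hγ_ker, hγ_zero⟩ : ∃ γ : SP k → ℂ, (∀ c, γ (Setoid.ker c) = entry F c) ∧
      ∀ d, (¬∃ c : Fin k ⊕ Fin k → Fin n, Setoid.ker c = d) → γ d = 0 :=
    ⟨_, hfactor.extend_apply 0, fun d hd => Function.extend_apply' _ _ d hd⟩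
  have hF_eq : F = ∑ d, γ d • phiX n k d :=
    ext_entry fun c => by simp [entry_sum_smul, entry_phiX, hγ_ker]
  have hγ : ∀ d, γ d ≠ 0 → inA r p n d := fun d hd => by
    by_cases hrange : ∃ c : Fin k ⊕ Fin k → Fin n, Setoid.ker c = d
    · obtain ⟨c, rfl⟩ := hrange
      exact inA_ker_of_entry_ne_zero hr hpr hF (hγ_ker c ▸ hd)
    · exact absurd (hγ_zero d hrange) hd
  rw [hF_eq]
  refine Submodule.sum_mem _ fun d _ => ?_
  by_cases h : γ d = 0
  · simp [h]
  · exact Submodule.smul_mem _ _ (Submodule.subset_span ⟨d, hγ d h, rfl⟩)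

lemma phiX_eq_zero_of_lt {d : SP k} (hd : n < nBlocks d) : phiX n k d = 0 :=
  ext_entry fun c => by
    rw [entry_phiX, if_neg (by rintro rfl; exact (nBlocks_ker_le c).not_gt hd)]
    simp [entry]

lemma linearIndependent_phiX (h : 2 * k ≤ n) : LinearIndependent ℂ (phiX n k) := by
  refine Fintype.linearIndependent_iff.mpr fun g hg d => ?_
  obtain ⟨c, rfl⟩ := exists_ker_eq_of_nBlocks_le ((nBlocks_le_two_mul d).trans h)
  have := congrArg (entry · c) hg
  simp only [entry_sum_smul, entry_phiX] at this
  simpa [entry] using this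

end Centralizer

theorem statement0_general (r p n k : ℕ) (hr : 0 < r) (hpr : p ∣ r) :
    ((Submodule.span ℂ (TanSet r p n k) :
        Submodule ℂ (TP n k →ₗ[ℂ] TP n k)) : Set (TP n k →ₗ[ℂ] TP n k))
      = centG r p n k ∧
    (∀ d : SP k, inA r p n d → n < nBlocks d → phiX n k d = 0) ∧
    (2 * k ≤ n →
      LinearIndependent ℂ fun d : {d : SP k // inA r p n d} => phiX n k d.1) := by
  refine ⟨?_, fun d _ hd => phiX_eq_zero_of_lt hd,
    fun h => (linearIndependent_phiX h).comp _ Subtype.val_injective⟩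
  have hspan_le : Submodule.span ℂ (TanSet r p n k) ≤
      Subalgebra.toSubmodule (Subalgebra.centralizer ℂ (tensorPow n k '' GSet r p n)) := by
    rw [Submodule.span_le, Subalgebra.coe_toSubmodule, ← centG_eq_centralizer]
    rintro _ ⟨d, hd, rfl⟩
    exact phiX_mem_centG hr hpr hd
  refine Set.Subset.antisymm ?_ fun F hF => mem_span_of_mem_centG hr hpr hF
  rw [centG_eq_centralizer]
  exact hspan_le

/-- The span of `{φ_k(x_d) : d ∈ A_k(r,p,n)}` equals the centralizer
algebra `End_{G(r,p,n)}(V^{⊗k})`; the `φ_k(x_d)` with more than `n` blocks vanish;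
and for `n ≥ 2k` the family is linearly independent. -/
theorem statement0 (r p n k : ℕ) (hr : 0 < r) (hp : 0 < p) (hn : 0 < n) (hk : 0 < k)
    (hpr : p ∣ r) :
    ((Submodule.span ℂ (TanSet r p n k) :
        Submodule ℂ (TP n k →ₗ[ℂ] TP n k)) : Set (TP n k →ₗ[ℂ] TP n k))
      = centG r p n k ∧
    (∀ d : SP k, inA r p n d → n < nBlocks d → phiX n k d = 0) ∧
    (2 * k ≤ n →
      LinearIndependent ℂ fun d : {d : SP k // inA r p n d} => phiX n k d.1) :=
  statement0_general r p n k hr hpr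

end Tanabe
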